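/- For every even k ≥ 4 and every n ≥ k, the number of distinct Lyndon factors of W_n beginning with the letter k equals the number of distinct Lyndon factors of W_{n-k+2} beginning with the letter 2. -/

import Mathlib

/-- The morphism `phi` on the alphabet `ℕ`: `phi (2i) = (2i)(2i+1)` and `phi (2i+1) = (2i+2)`. -/
def phi (a : ℕ) : List ℕ := if a % 2 = 0 then [a, a + 1] else [a + 1]

/-- The finite ZWW words: `W n = phi^n(0)`, so `W 0 = 0`, `W 1 = 01`, `W 2 = 012`, `W 3 = 01223`. -/
def W (n : ℕ) : List ℕ := (fun w => w.flatMap phi)^[n] [0]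

/-- A nonempty word is Lyndon if it is lexicographically strictly less than each of its
conjugates `v ++ u` where `x = u ++ v` with `u, v` nonempty. -/
def IsLyndon (x : List ℕ) : Prop :=
  x ≠ [] ∧ ∀ u v : List ℕ, u ≠ [] → v ≠ [] → x = u ++ v → List.Lex (· < ·) x (v ++ u)

/-! `W (m + 2) = W (m + 1) ++ (W m).map (· + 2)`, and the shifted copy begins with the letter `2`.
A Lyndon word begins with its least letter, so a Lyndon factor of `W (m + 2)` beginning with
`k + 2 ≥ 3` contains no letter `≤ 2`; by induction on `m` it cannot straddle the border letter `2`
and therefore lies in the shifted copy of `W m`. Since shifting by `2` preserves the Lyndon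
property, the Lyndon factors of `W (m + 2)` beginning with `k + 2` are exactly the shifts of the
Lyndon factors of `W m` beginning with `k`, for every `k ≥ 1`. Applying this `(k - 2) / 2` times
brings the first letter down to `2`. -/

theorem List.lex_map_iff_of_strictMono {α β : Type*} [LinearOrder α] [Preorder β] {f : α → β}
    (hf : StrictMono f) : ∀ {x y : List α}, Lex (· < ·) (x.map f) (y.map f) ↔ Lex (· < ·) x y
  | [], [] => by simp
  | [], _ :: _ => by simp
  | _ :: _, [] => by simp
  | _ :: _, _ :: _ => by
    simp only [map_cons, cons_lex_cons_iff, hf.lt_iff_lt, hf.injective.eq_iff,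
      lex_map_iff_of_strictMono hf]

theorem List.infix_or_infix_of_infix_append_cons {α : Type*} {u v w : List α} {c : α}
    (h : u <:+: v ++ c :: w) (hc : c ∉ u) : u <:+: v ∨ u <:+: w := by
  have eq_nil_of_prefix {l : List α} (hl : l <+: c :: w) (hcl : c ∉ l) : l = [] := by
    rcases prefix_cons_iff.mp hl with hl | ⟨t, rfl, -⟩
    · exact hl
    · exact absurd mem_cons_self hcl
  rcases infix_append_iff.mp h with h | h | ⟨l₁, l₂, rfl, hl₁, hl₂⟩
  · exact .inl h
  · rcases infix_cons_iff.mp h with h | h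
    · exact .inl (eq_nil_of_prefix h hc ▸ nil_infix)
    · exact .inr h
  · rw [eq_nil_of_prefix hl₂ fun h ↦ hc (mem_append_right _ h), append_nil]
    exact .inl hl₁.isInfix

theorem IsLyndon.head_le {u : List ℕ} {k b : ℕ} (h : IsLyndon u) (hk : u.head? = some k)
    (hb : b ∈ u) : k ≤ b := by
  obtain ⟨t, rfl⟩ : ∃ t, u = k :: t := List.head?_eq_some_iff.mp hk
  rcases List.mem_cons.mp hb with rfl | hb
  · exact le_rfl
  obtain ⟨t₁, t₂, rfl⟩ := List.append_of_mem hb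
  rcases List.cons_lex_cons_iff.mp (h.2 (k :: t₁) (b :: t₂) (by simp) (by simp) rfl) with
    hlt | ⟨heq, -⟩
  · exact hlt.le
  · exact heq.le

theorem isLyndon_map_iff {f : ℕ → ℕ} (hf : StrictMono f) {u : List ℕ} :
    IsLyndon (u.map f) ↔ IsLyndon u := by
  refine and_congr (by simp) ⟨fun h a b ha hb hab ↦ ?_, fun h a b ha hb hab ↦ ?_⟩
  · have := h (a.map f) (b.map f) (by simpa) (by simpa) (by simp [hab])
    rwa [← List.map_append, List.lex_map_iff_of_strictMono hf] at this
  · obtain ⟨a, b, rfl, rfl, rfl⟩ := List.map_eq_append_iff.mp hab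
    rw [← List.map_append, List.lex_map_iff_of_strictMono hf]
    exact h a b (by simpa using ha) (by simpa using hb) rfl

theorem W_succ (m : ℕ) : W (m + 1) = (W m).flatMap phi :=
  Function.iterate_succ_apply' _ _ _

theorem phi_add_two (a : ℕ) : phi (a + 2) = (phi a).map (· + 2) := by
  unfold phi
  rcases Nat.mod_two_eq_zero_or_one a with h | h <;> simp [Nat.add_mod_right, h]

theorem flatMap_phi_map_add_two (v : List ℕ) :
    (v.map (· + 2)).flatMap phi = (v.flatMap phi).map (· + 2) := by
  induction v with
  | nil => rfl
  | cons a v ih => simp [ih, phi_add_two]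

theorem W_add_two (m : ℕ) : W (m + 2) = W (m + 1) ++ (W m).map (· + 2) := by
  induction m with
  | zero => rfl
  | succ m ih =>
    calc W (m + 3) = (W (m + 1) ++ (W m).map (· + 2)).flatMap phi := by rw [W_succ, ih]
      _ = W (m + 2) ++ (W (m + 1)).map (· + 2) := by
        rw [List.flatMap_append, flatMap_phi_map_add_two, ← W_succ, ← W_succ]

theorem W_eq_zero_cons (m : ℕ) : W m = 0 :: (W m).tail := by
  induction m with
  | zero => rfl
  | succ m ih => rw [W_succ, ih]; rfl

theorem W_prefix_W_succ (m : ℕ) : W m <+: W (m + 1) := by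
  cases m with
  | zero => exact ⟨[1], rfl⟩
  | succ m => exact W_add_two m ▸ List.prefix_append _ _

theorem infix_map_add_two_of_infix_W {u : List ℕ} (hu : ∀ a ∈ u, 3 ≤ a) :
    ∀ {m : ℕ}, u <:+: W (m + 2) → u <:+: (W m).map (· + 2)
  | 0, h => by
    have : u = [] := List.eq_nil_iff_forall_not_mem.mpr fun a ha ↦ by
      have hmem : a ∈ [0, 1, 2] := h.subset ha
      have := hu a ha
      simp only [List.mem_cons, List.not_mem_nil, or_false] at hmem
      omega
    exact this ▸ List.nil_infix
  | m + 1, h => by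
    have hw : (W (m + 1)).map (· + 2) = 2 :: (W (m + 1)).tail.map (· + 2) := by
      conv_lhs => rw [W_eq_zero_cons]
      rfl
    rw [W_add_two (m + 1), hw] at h
    rcases List.infix_or_infix_of_infix_append_cons h fun h2 ↦ by have := hu 2 h2; omega with
      h | h
    · exact (infix_map_add_two_of_infix_W hu h).trans ((W_prefix_W_succ m).map _).isInfix
    · exact hw ▸ List.infix_cons h

def lyndonFactors (w : List ℕ) (k : ℕ) : Set (List ℕ) :=
  {u | u <:+: w ∧ IsLyndon u ∧ u.head? = some k}

theorem lyndonFactors_W_add_two {k : ℕ} (hk : 1 ≤ k) (m : ℕ) :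
    lyndonFactors (W (m + 2)) (k + 2) = List.map (· + 2) '' lyndonFactors (W m) k := by
  have shift : StrictMono (· + 2 : ℕ → ℕ) := strictMono_id.add_const 2
  ext u
  constructor
  · rintro ⟨hfac, hlyn, hhead⟩
    have hu : ∀ a ∈ u, 3 ≤ a := fun a ha ↦ by have := hlyn.head_le hhead ha; omega
    obtain ⟨v, hv, rfl⟩ := List.infix_map_iff.mp (infix_map_add_two_of_infix_W hu hfac)
    rw [List.head?_map, Option.map_eq_some_iff] at hhead
    obtain ⟨k', hk', hkk'⟩ := hhead
    obtain rfl : k' = k := by omega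
    exact ⟨v, ⟨hv, (isLyndon_map_iff shift).mp hlyn, hk'⟩, rfl⟩
  · rintro ⟨v, ⟨hfac, hlyn, hhead⟩, rfl⟩
    refine ⟨(hfac.map _).trans ?_, (isLyndon_map_iff shift).mpr hlyn, by simp [hhead]⟩
    exact W_add_two m ▸ List.infix_append_right

theorem ncard_lyndonFactors_W_add {k : ℕ} (hk : 1 ≤ k) (m j : ℕ) :
    (lyndonFactors (W (m + 2 * j)) (k + 2 * j)).ncard = (lyndonFactors (W m) k).ncard := by
  induction j with
  | zero => rfl
  | succ j ih =>
    rw [Nat.mul_succ, ← add_assoc, ← add_assoc, lyndonFactors_W_add_two (by omega),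
      Set.ncard_image_of_injective _ (List.map_injective_iff.mpr (add_left_injective 2)), ih]

/-- For every even `k ≥ 4` and every `n ≥ k`, the number of distinct Lyndon factors
of `W n` beginning with `k` equals the number of distinct Lyndon factors of
`W (n-k+2)` beginning with `2`. -/
theorem zww_lyndon_count_even : ∀ k n : ℕ, Even k → 4 ≤ k → k ≤ n →
    {u : List ℕ | u <:+: W n ∧ IsLyndon u ∧ u.head? = some k}.ncard =
      {u : List ℕ | u <:+: W (n - k + 2) ∧ IsLyndon u ∧ u.head? = some 2}.ncard := by
  rintro k n ⟨r, rfl⟩ hk hn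
  have := ncard_lyndonFactors_W_add (k := 2) (by norm_num) (n - (r + r) + 2) (r - 1)
  rw [show n - (r + r) + 2 + 2 * (r - 1) = n by omega,
    show 2 + 2 * (r - 1) = r + r by omega] at this
  exact this
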